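/- In a fuzzy formal context (G, M, Ĩ), for all A ⊆ G, B ⊆ M, c ∈ [0,1]: A^◇_{>1-c} ⊆ B if and only if A ⊆ B^□_c, i.e., the pair (·)^◇_{>1-c} : P(G) → P(M) and (·)^□_c : P(M) → P(G) forms an adjunction (Galois connection between (P(G),⊆) and (P(M),⊆)). -/
import Mathlib


/-- Infimum with the convention `inf ∅ = 1`. -/
noncomputable def fInf (S : Set ℝ) : ℝ := sInf (insert 1 S)

/-- Supremum with the convention `sup ∅ = 0`. -/
noncomputable def fSup (S : Set ℝ) : ℝ := sSup (insert 0 S)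

/-- `A^◇_{>1-c} = {m | sup_{g∈A} Ĩ(g,m) > 1-c}`. -/
noncomputable def diamondStrictCut {G M : Type*} (I : G → M → ℝ) (c : ℝ) (A : Set G) : Set M :=
  {m | fSup ((fun g => I g m) '' A) > c}

/-- `B^□_c = {g | inf_{m∉B} (1 - Ĩ(g,m)) ≥ c}`. -/
noncomputable def boxCut {G M : Type*} (I : G → M → ℝ) (c : ℝ) (B : Set M) : Set G :=
  {g | fInf ((fun m => 1 - I g m) '' Bᶜ) ≥ c}

/-- The pair `((·)^◇_{>1-c}, (·)^□_c)` forms an adjunction: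
`A^◇_{>1-c} ⊆ B` iff `A ⊆ B^□_c`. -/
theorem diamond_box_adjunction {G M : Type*} (I : G → M → ℝ)
    (hI : ∀ g m, I g m ∈ Set.Icc (0:ℝ) 1)
    (A : Set G) (B : Set M) (c : ℝ) (hc : c ∈ Set.Icc (0:ℝ) 1) :
    diamondStrictCut I (1 - c) A ⊆ B ↔ A ⊆ boxCut I c B := by

  obtain ⟨hc0, hc1⟩ := hc
  constructor
  · intro h g hg
    simp only [boxCut, fInf, Set.mem_setOf_eq]
    apply le_csInf (Set.insert_nonempty _ _)
    rintro x (rfl | ⟨m, hm, rfl⟩)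
    · exact hc1
    · -- m ∉ B, so fSup ≤ 1 - c
      have hsup : ¬ fSup ((fun g => I g m) '' A) > 1 - c := by
        intro hgt
        exact hm (h hgt)
      push_neg at hsup
      have hbdd : BddAbove (insert 0 ((fun g => I g m) '' A)) := by
        refine ⟨1, ?_⟩
        rintro x (rfl | ⟨g', _, rfl⟩)
        · norm_num
        · exact (hI g' m).2
      have hIle : I g m ≤ fSup ((fun g => I g m) '' A) :=
        le_csSup hbdd (Set.mem_insert_iff.mpr (Or.inr ⟨g, hg, rfl⟩))
      show c ≤ 1 - I g m
      linarith
  · intro h m hm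
    by_contra hmB
    simp only [diamondStrictCut, Set.mem_setOf_eq] at hm
    have hle : fSup ((fun g => I g m) '' A) ≤ 1 - c := by
      apply csSup_le (Set.insert_nonempty _ _)
      rintro x (rfl | ⟨g, hg, rfl⟩)
      · linarith
      · have hbox := h hg
        simp only [boxCut, fInf, Set.mem_setOf_eq] at hbox
        have hbddb : BddBelow (insert 1 ((fun m => 1 - I g m) '' Bᶜ)) := by
          refine ⟨0, ?_⟩
          rintro x (rfl | ⟨m', _, rfl⟩)
          · norm_num
          · have := (hI g m').2
            show (0:ℝ) ≤ 1 - I g m'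
            linarith
        have := csInf_le hbddb (Set.mem_insert_iff.mpr (Or.inr ⟨m, hmB, rfl⟩))
        simp only at this
        show I g m ≤ 1 - c
        linarith
    linarith
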